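/- arXiv:1911.05502 — 5 statements merged into one kernel-verified Lean document; each statement's English description precedes it below -/
import Mathlib

section
/- Let Y be a nonnegative integrable random variable and G a sub-σ-algebra. Then for all x > 0, x·P(E[Y|G] > x) ≤ E[2Y·1{2Y > x}]. -/
open MeasureTheory ProbabilityTheory
open scoped ProbabilityTheory

/-!
On `A = {x < E[Y|G]}`, which is `G`-measurable, the defining property of conditional expectation
and Markov's inequality give `x P(A) ≤ ∫_A E[Y|G] = ∫_A Y`, hence `x P(A) ≤ ∫_A (2Y - x)`. The
integrand `2Y - x` is dominated on `A` by `2Y 1{2Y > x}`, which is nonnegative off `A`.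
-/

namespace MeasureTheory

variable {Ω : Type*} {m0 : MeasurableSpace Ω} {μ : Measure Ω}

lemma Integrable.indicator_lt_self {g : Ω → ℝ} (hg : Integrable g μ) (x : ℝ) :
    Integrable ({ω | x < g ω}.indicator g) μ := by
  have hcomp : {ω | x < g ω}.indicator g = (Set.Ioi x).indicator id ∘ g := by
    ext ω
    simp only [Set.indicator, Set.mem_ofPred_eq, Set.mem_Ioi, Function.comp_apply, id]
  refine hg.mono ?_ (Filter.Eventually.of_forall fun ω => norm_indicator_le_norm_self g ω)
  rw [hcomp]
  exact ((measurable_id.indicator measurableSet_Ioi).comp_aemeasurable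
    hg.aemeasurable).aestronglyMeasurable

lemma setIntegral_sub_le_integral_indicator_lt {g : Ω → ℝ} (hg : Integrable g μ)
    (hg_nonneg : 0 ≤ᵐ[μ] g) {A : Set Ω} (hA : MeasurableSet A) (hμA : μ A ≠ ⊤) {x : ℝ}
    (hx : 0 ≤ x) :
    ∫ ω in A, g ω ∂μ - x * μ.real A ≤ ∫ ω, {ω | x < g ω}.indicator g ω ∂μ := by
  have hsplit : ∫ ω, A.indicator (fun ω => g ω - x) ω ∂μ = ∫ ω in A, g ω ∂μ - x * μ.real A := by
    rw [integral_indicator hA, integral_sub hg.integrableOn (integrableOn_const hμA),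
      setIntegral_const, smul_eq_mul, mul_comm]
  rw [← hsplit]
  refine integral_mono_ae ((hg.integrableOn.sub (integrableOn_const hμA)).integrable_indicator hA)
    (hg.indicator_lt_self x) ?_
  filter_upwards [hg_nonneg] with ω (hω : 0 ≤ g ω)
  by_cases hωA : ω ∈ A <;> by_cases hlt : x < g ω <;>
    simp [Set.indicator, hωA, hlt] <;> linarith

lemma mul_measureReal_lt_condExp_le_setIntegral [IsFiniteMeasure μ] {m : MeasurableSpace Ω}
    (hm : m ≤ m0) {Y : Ω → ℝ} (hY : Integrable Y μ) (x : ℝ) :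
    x * μ.real {ω | x < μ[Y|m] ω} ≤ ∫ ω in {ω | x < μ[Y|m] ω}, Y ω ∂μ := by
  have hAm : MeasurableSet[m] {ω | x < μ[Y|m] ω} :=
    measurableSet_lt measurable_const stronglyMeasurable_condExp.measurable
  rw [← setIntegral_condExp hm hY hAm]
  exact setIntegral_ge_of_const_le_real (hm _ hAm) (measure_ne_top _ _) (fun _ hω => hω.le)
    integrable_condExp.integrableOn

theorem mul_measureReal_lt_condExp_le_integral_indicator [IsFiniteMeasure μ]
    {m : MeasurableSpace Ω} (hm : m ≤ m0) {Y : Ω → ℝ} (hY : Integrable Y μ)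
    (hY_nonneg : 0 ≤ᵐ[μ] Y) {x : ℝ} (hx : 0 ≤ x) :
    x * μ.real {ω | x < μ[Y|m] ω} ≤
      ∫ ω, {ω | x < 2 * Y ω}.indicator (fun ω => 2 * Y ω) ω ∂μ := by
  have hA : MeasurableSet[m0] {ω | x < μ[Y|m] ω} :=
    hm _ (measurableSet_lt measurable_const stronglyMeasurable_condExp.measurable)
  have hmarkov := mul_measureReal_lt_condExp_le_setIntegral hm hY x
  have hdom := setIntegral_sub_le_integral_indicator_lt (hY.const_mul 2)
    (hY_nonneg.mono fun ω (hω : 0 ≤ Y ω) => by simpa using hω) hA (measure_ne_top _ _) hx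
  rw [integral_const_mul] at hdom
  linarith

end MeasureTheory

theorem stmt_0 {Ω : Type*} [MeasureSpace Ω] [IsProbabilityMeasure (ℙ : Measure Ω)]
    (Y : Ω → ℝ) (hYpos : ∀ ω, 0 ≤ Y ω) (hYint : Integrable Y)
    (G : MeasurableSpace Ω) (hG : G ≤ ‹MeasureSpace Ω›.toMeasurableSpace) :
    ∀ x : ℝ, 0 < x →
      x * (ℙ {ω | x < (ℙ[Y|G]) ω}).toReal ≤
        ∫ ω, Set.indicator {ω | x < 2 * Y ω} (fun ω => 2 * Y ω) ω := fun _ hx =>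
  mul_measureReal_lt_condExp_le_integral_indicator hG hYint (ae_of_all _ hYpos) hx.le
end

section
/- Let Y be a nonnegative integrable random variable and G a sub-σ-algebra. Then for all x > 0, P(E[Y|G] > x) ≤ 4·∫_{1/4}^{∞} P(Y > x·v) dv. -/
/-!
On `A = {E[Y|G] > x}` Markov's inequality and the defining property of conditional expectation give
`x P(A) ≤ ∫_A Y`. By the layer cake formula `∫_A Y = ∫_0^∞ P(A ∩ {Y > t}) dt`; the part over
`t ≤ x/4` is at most `(x/4) P(A)` and the part over `t > x/4` at most `∫_{x/4}^∞ P(Y > t) dt`,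
which is `x ∫_{1/4}^∞ P(Y > x v) dv` after the substitution `t = x v`. Hence
`P(A) ≤ (4/3) ∫_{1/4}^∞ P(Y > x v) dv`.
-/

open MeasureTheory ProbabilityTheory Set
open scoped ProbabilityTheory

namespace MeasureTheory

variable {α : Type*} {mα : MeasurableSpace α} {μ : Measure α} {f : α → ℝ}

variable (μ f) in
lemma antitone_measure_lt : Antitone fun t ↦ μ {a | t < f a} :=
  fun _ _ hst ↦ measure_mono fun _ h ↦ lt_of_le_of_lt hst h

lemma Integrable.integrableOn_Ioi_measureReal_lt (hf : Integrable f μ) (hf_nn : 0 ≤ᵐ[μ] f) :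
    IntegrableOn (fun t ↦ μ.real {a | t < f a}) (Ioi 0) := by
  refine integrable_toReal_of_lintegral_ne_top
    (antitone_measure_lt μ f).measurable.aemeasurable ?_
  rw [← lintegral_eq_lintegral_meas_lt μ hf_nn hf.aemeasurable]
  exact hf.lintegral_lt_top.ne

lemma Integrable.setIntegral_le_mul_add_integral_Ioi_measureReal_lt [IsFiniteMeasure μ]
    (hf : Integrable f μ) (hf_nn : 0 ≤ᵐ[μ] f) {c : ℝ} (hc : 0 ≤ c) (s : Set α) :
    ∫ a in s, f a ∂μ ≤ c * μ.real s + ∫ t in Ioi c, μ.real {a | t < f a} := by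
  have hint : IntegrableOn (fun t ↦ (μ.restrict s).real {a | t < f a}) (Ioi 0) :=
    hf.restrict.integrableOn_Ioi_measureReal_lt (ae_restrict_of_ae hf_nn)
  have hint' := hf.integrableOn_Ioi_measureReal_lt hf_nn
  have hIoi : Ioi c ⊆ Ioi 0 := Ioi_subset_Ioi hc
  have low : ∫ t in Ioc 0 c, (μ.restrict s).real {a | t < f a} ≤ c * μ.real s := by
    calc ∫ t in Ioc 0 c, (μ.restrict s).real {a | t < f a}
        ≤ ∫ _ in Ioc 0 c, μ.real s := by
          refine setIntegral_mono (hint.mono_set Ioc_subset_Ioi_self)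
            (integrableOn_const measure_Ioc_lt_top.ne) fun _ ↦ ?_
          exact (measureReal_mono (subset_univ _) (measure_ne_top _ _)).trans_eq
            (measureReal_restrict_apply_univ s)
      _ = c * μ.real s := by simp [hc]
  have high : ∫ t in Ioi c, (μ.restrict s).real {a | t < f a}
      ≤ ∫ t in Ioi c, μ.real {a | t < f a} :=
    integral_mono_of_nonneg (ae_of_all _ fun _ ↦ measureReal_nonneg) (hint'.mono_set hIoi)
      (ae_of_all _ fun _ ↦ ENNReal.toReal_mono (measure_ne_top _ _) (Measure.restrict_le_self _))
  calc ∫ a in s, f a ∂μ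
      = ∫ t in Ioi 0, (μ.restrict s).real {a | t < f a} :=
        hf.restrict.integral_eq_integral_meas_lt (ae_restrict_of_ae hf_nn)
    _ = (∫ t in Ioc 0 c, (μ.restrict s).real {a | t < f a})
          + ∫ t in Ioi c, (μ.restrict s).real {a | t < f a} := by
        rw [← Ioc_union_Ioi_eq_Ioi hc, setIntegral_union Ioc_disjoint_Ioi_same measurableSet_Ioi
          (hint.mono_set Ioc_subset_Ioi_self) (hint.mono_set hIoi)]
    _ ≤ c * μ.real s + ∫ t in Ioi c, μ.real {a | t < f a} := add_le_add low high

end MeasureTheory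

theorem stmt_1 {Ω : Type*} [MeasureSpace Ω] [IsProbabilityMeasure (ℙ : Measure Ω)]
    (Y : Ω → ℝ) (hYpos : ∀ ω, 0 ≤ Y ω) (hYint : Integrable Y)
    (G : MeasurableSpace Ω) (hG : G ≤ ‹MeasureSpace Ω›.toMeasurableSpace) :
    ∀ x : ℝ, 0 < x →
      (ℙ {ω | x < (ℙ[Y|G]) ω}).toReal ≤
        4 * ∫ v in Set.Ioi (1/4 : ℝ), (ℙ {ω | x * v < Y ω}).toReal := by
  intro x hx
  set A : Set Ω := {ω | x < (ℙ[Y|G]) ω}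
  have hA : MeasurableSet[G] A :=
    measurableSet_lt measurable_const stronglyMeasurable_condExp.measurable
  have markov : x * Measure.real ℙ A ≤ ∫ ω in A, Y ω := by
    rw [← setIntegral_condExp hG hYint hA]
    exact setIntegral_ge_of_const_le_real (hG _ hA)
      (measure_ne_top _ _) (fun _ hω ↦ hω.le) integrable_condExp.integrableOn
  have layers := hYint.setIntegral_le_mul_add_integral_Ioi_measureReal_lt (ae_of_all _ hYpos)
    (by positivity : 0 ≤ x / 4) A
  have scale : ∫ t in Ioi (x / 4), Measure.real ℙ {ω | t < Y ω}
      = x * ∫ v in Ioi (1/4 : ℝ), Measure.real ℙ {ω | x * v < Y ω} := by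
    rw [← smul_eq_mul, integral_comp_mul_left_Ioi' (fun t ↦ Measure.real ℙ {ω | t < Y ω}) _ hx]
    ring_nf
  have hI : 0 ≤ ∫ v in Ioi (1/4 : ℝ), Measure.real ℙ {ω | x * v < Y ω} :=
    setIntegral_nonneg measurableSet_Ioi fun _ _ ↦ measureReal_nonneg
  simp only [← measureReal_def]
  nlinarith
end

section
/- Let Y and Z be nonnegative random variables such that Z ≤ E[Y | Z] almost surely. Then for all x > 0, P(Z > x) ≤ ∫_1^∞ P(Y > x·v/4) dv. -/
open MeasureTheory ProbabilityTheory
open scoped ProbabilityTheory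

/-!
On `A = {Z > x}` we have `x < Z ≤ E[Y | Z]`, and `A` is `σ(Z)`-measurable, so
`x P(A) ≤ E[Y; A]`. The pointwise bound `Y ≤ x/2 + 2 (Y - x/4)⁺` gives
`E[Y; A] ≤ (x/2) P(A) + 2 E[(Y - x/4)⁺]`, and by the layer-cake formula
`E[(Y - x/4)⁺] = ∫_{x/4}^∞ P(Y > u) du = (x/4) ∫_1^∞ P(Y > x v / 4) dv`.
Hence `(x/2) P(A) ≤ (x/2) ∫_1^∞ P(Y > x v / 4) dv`.
-/

open Set

theorem integral_comp_add_left_Ioi {E : Type*} [NormedAddCommGroup E] [NormedSpace ℝ E]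
    (g : ℝ → E) (a b : ℝ) :
    ∫ t in Ioi a, g (b + t) = ∫ u in Ioi (b + a), g u := by
  rw [← (measurePreserving_add_left volume b).setIntegral_preimage_emb
    (measurableEmbedding_addLeft b) g (Ioi (b + a))]
  simp

section LayerCake

variable {Ω : Type*} [MeasurableSpace Ω] {μ : Measure Ω} {Y : Ω → ℝ}

theorem mul_integral_Ioi_one_measureReal_lt {c : ℝ} (hc : 0 < c) :
    c * ∫ v in Ioi 1, μ.real {ω | c * v < Y ω} = ∫ u in Ioi c, μ.real {ω | u < Y ω} := by
  simpa using integral_comp_mul_left_Ioi' (fun u => μ.real {ω | u < Y ω}) 1 hc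

variable [IsFiniteMeasure μ]

theorem MeasureTheory.Integrable.posPart_sub_const (hY : Integrable Y μ) (c : ℝ) :
    Integrable (fun ω => max (Y ω - c) 0) μ :=
  (hY.sub (integrable_const c)).pos_part

theorem integral_posPart_sub_eq_integral_measureReal_lt (hY : Integrable Y μ) (c : ℝ) :
    ∫ ω, max (Y ω - c) 0 ∂μ = ∫ u in Ioi c, μ.real {ω | u < Y ω} := by
  have hlevel : ∀ t ∈ Ioi (0 : ℝ),
      μ.real {ω | t < max (Y ω - c) 0} = μ.real {ω | c + t < Y ω} := by
    intro t ht
    congr 1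
    ext ω
    simp only [mem_ofPred_eq, lt_max_iff, lt_sub_iff_add_lt', or_iff_left (not_lt_of_gt ht.out)]
  rw [(hY.posPart_sub_const c).integral_eq_integral_meas_lt
      (.of_forall fun _ => le_max_right _ _),
    setIntegral_congr_fun measurableSet_Ioi hlevel,
    integral_comp_add_left_Ioi (fun u => μ.real {ω | u < Y ω}), add_zero]

theorem setIntegral_le_mul_measureReal_add_integral_posPart
    (hY : Integrable Y μ) {s : Set Ω} (hs : MeasurableSet s) {c : ℝ} (hc : 0 ≤ c) :
    ∫ ω in s, Y ω ∂μ ≤ 2 * c * μ.real s + 2 * ∫ ω, max (Y ω - c) 0 ∂μ := by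
  have hpos := hY.posPart_sub_const c
  calc ∫ ω in s, Y ω ∂μ ≤ ∫ ω in s, (2 * c + 2 * max (Y ω - c) 0) ∂μ := by
        refine setIntegral_mono_on hY.integrableOn
          ((integrable_const _).add (hpos.const_mul 2)).integrableOn hs fun ω _ => ?_
        rcases le_total 0 (Y ω) with hY0 | hY0 <;>
          linarith [le_max_left (Y ω - c) 0, le_max_right (Y ω - c) 0]
    _ = 2 * c * μ.real s + 2 * ∫ ω in s, max (Y ω - c) 0 ∂μ := by
        rw [integral_add (integrable_const _).integrableOn (hpos.const_mul 2).integrableOn,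
          setIntegral_const, integral_const_mul, smul_eq_mul, mul_comm (μ.real s)]
    _ ≤ 2 * c * μ.real s + 2 * ∫ ω, max (Y ω - c) 0 ∂μ := by
        gcongr 2 * c * μ.real s + 2 * ?_
        exact setIntegral_le_integral hpos (.of_forall fun _ => le_max_right _ _)

end LayerCake

theorem mul_measureReal_le_setIntegral_of_le_condExp {Ω : Type*} {m m₀ : MeasurableSpace Ω}
    {μ : Measure Ω} [IsFiniteMeasure μ] {Y : Ω → ℝ} (hm : m ≤ m₀) (hY : Integrable Y μ)
    {s : Set Ω} (hs : MeasurableSet[m] s) {x : ℝ} (hx : ∀ᵐ ω ∂μ, ω ∈ s → x ≤ μ[Y | m] ω) :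
    x * μ.real s ≤ ∫ ω in s, Y ω ∂μ :=
  calc x * μ.real s = ∫ ω in s, x ∂μ := by rw [setIntegral_const, smul_eq_mul, mul_comm]
    _ ≤ ∫ ω in s, (μ[Y | m]) ω ∂μ :=
        setIntegral_mono_on_ae (integrableOn_const (measure_ne_top _ _))
          integrable_condExp.integrableOn (hm s hs) hx
    _ = ∫ ω in s, Y ω ∂μ := setIntegral_condExp hm hY hs

theorem stmt_2_general {Ω : Type*} [MeasureSpace Ω] [IsProbabilityMeasure (ℙ : Measure Ω)]
    (Y Z : Ω → ℝ)
    (hYint : Integrable Y) (hZmeas : Measurable Z)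
    (hdom : ∀ᵐ ω ∂ℙ, Z ω ≤ (ℙ[Y | MeasurableSpace.comap Z inferInstance]) ω) :
    ∀ x : ℝ, 0 < x →
      (ℙ {ω | x < Z ω}).toReal ≤
        ∫ v in Set.Ioi (1 : ℝ), (ℙ {ω | x * v / 4 < Y ω}).toReal := by
  intro x hx
  set A := {ω | x < Z ω}
  have hA : MeasurableSet[MeasurableSpace.comap Z inferInstance] A :=
    ⟨Ioi x, measurableSet_Ioi, rfl⟩
  have markov : x * (ℙ : Measure Ω).real A ≤ ∫ ω in A, Y ω :=
    mul_measureReal_le_setIntegral_of_le_condExp hZmeas.comap_le hYint hA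
      (hdom.mono fun ω hle hω => le_trans (le_of_lt hω) hle)
  have tail := setIntegral_le_mul_measureReal_add_integral_posPart hYint
    (hZmeas.comap_le A hA) (c := x / 4) (by positivity)
  rw [integral_posPart_sub_eq_integral_measureReal_lt hYint,
    ← mul_integral_Ioi_one_measureReal_lt (by positivity)] at tail
  simp_rw [mul_div_right_comm x, ← measureReal_def]
  refine le_of_mul_le_mul_left (a := x / 2) ?_ (by positivity)
  linarith

theorem stmt_2 {Ω : Type*} [MeasureSpace Ω] [IsProbabilityMeasure (ℙ : Measure Ω)]
    (Y Z : Ω → ℝ) (hYpos : ∀ ω, 0 ≤ Y ω) (hZpos : ∀ ω, 0 ≤ Z ω)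
    (hYint : Integrable Y) (hZmeas : Measurable Z)
    (hdom : ∀ᵐ ω ∂ℙ, Z ω ≤ (ℙ[Y | MeasurableSpace.comap Z inferInstance]) ω) :
    ∀ x : ℝ, 0 < x →
      (ℙ {ω | x < Z ω}).toReal ≤
        ∫ v in Set.Ioi (1 : ℝ), (ℙ {ω | x * v / 4 < Y ω}).toReal :=
  stmt_2_general Y Z hYint hZmeas hdom
end

section
/- Let D_1, ..., D_n be a square-integrable martingale difference sequence with respect to (F_i)_{i=0}^n. Then for all x, v > 0, P( max_{1≤k≤n} |∑_{i=1}^k D_i| > x ) ≤ 2·exp(-x²/(2v²)) + P( ∑_{i=1}^n (D_i² + E[D_i² | F_{i-1}]) > v² ). -/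
open MeasureTheory ProbabilityTheory
open scoped ProbabilityTheory

open Finset Real

/-!
Write `S_k = ∑_{i ≤ k} D_i` and `V_k = ∑_{i ≤ k} (D_i² + E[D_i² | ℱ_{i-1}])`. For every `λ` the
process `exp (λ S_k - λ² V_k / 2)` is a nonnegative supermartingale started at `1`: conditionally
on `ℱ_k`, the elementary bound `exp (u - u²/2) ≤ 1 + u + u²/2` turns the new factor into at most
`1 + λ² E[D_{k+1}² | ℱ_k] / 2 ≤ exp (λ² E[D_{k+1}² | ℱ_k] / 2)`, which the compensator cancels.
On `{S_k > x for some k ≤ n, V_n ≤ v²}` this process reaches `exp (x² / (2v²))` when `λ = x / v²`,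
so Ville's maximal inequality bounds that event by `exp (-x² / (2v²))`. Applying this to `D` and
to `-D` gives the two-sided bound.
-/

theorem Real.exp_sub_sq_div_two_le (u : ℝ) : exp (u - u ^ 2 / 2) ≤ 1 + u + u ^ 2 / 2 := by
  -- `f` has derivative of the sign of `w`, so it is minimal at `0`, where it equals `1`.
  let f : ℝ → ℝ := fun w => (1 + w + w ^ 2 / 2) * exp (w ^ 2 / 2 - w)
  have hf' : ∀ w, HasDerivAt f (w * (w ^ 2 + w + 2) / 2 * exp (w ^ 2 / 2 - w)) w := by
    intro w
    have := (((hasDerivAt_id w).const_add 1).add ((hasDerivAt_pow 2 w).div_const 2)).mul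
      (((hasDerivAt_pow 2 w).div_const 2).sub (hasDerivAt_id w)).exp
    exact this.congr_deriv (by simp only [id, Pi.sub_apply, Pi.add_apply]; ring)
  have hf : Continuous f := by fun_prop
  have hf_ge : 1 ≤ f u := by
    have hf0 : f 0 = 1 := by simp [f]
    rw [← hf0]
    rcases le_total 0 u with hu | hu
    · refine monotoneOn_of_hasDerivWithinAt_nonneg (convex_Ici 0) hf.continuousOn
        (fun w _ => (hf' w).hasDerivWithinAt) (fun w hw => ?_) Set.self_mem_Ici hu hu
      rw [interior_Ici, Set.mem_Ioi] at hw
      positivity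
    · refine antitoneOn_of_hasDerivWithinAt_nonpos (convex_Iic 0) hf.continuousOn
        (fun w _ => (hf' w).hasDerivWithinAt) (fun w hw => ?_) hu Set.self_mem_Iic hu
      rw [interior_Iic, Set.mem_Iio] at hw
      have : 0 < w ^ 2 + w + 2 := by nlinarith
      exact mul_nonpos_of_nonpos_of_nonneg (by nlinarith) (exp_pos _).le
  calc exp (u - u ^ 2 / 2) ≤ exp (u - u ^ 2 / 2) * f u :=
        le_mul_of_one_le_right (exp_pos _).le hf_ge
    _ = 1 + u + u ^ 2 / 2 := by
      rw [mul_left_comm, ← exp_add, sub_add_sub_cancel', sub_self, exp_zero, mul_one]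

namespace MeasureTheory

variable {Ω : Type*} {m0 : MeasurableSpace Ω} {μ : Measure Ω}

theorem integrable_exp_sub_sq_div_two [IsFiniteMeasure μ] {X : Ω → ℝ}
    (hX : AEStronglyMeasurable X μ) : Integrable (fun ω => exp (X ω - X ω ^ 2 / 2)) μ := by
  refine .of_bound (by fun_prop) (exp (1 / 2)) (.of_forall fun ω => ?_)
  rw [norm_of_nonneg (exp_pos _).le, exp_le_exp]
  nlinarith [sq_nonneg (X ω - 1)]

theorem condExp_exp_sub_sq_div_two_le [IsFiniteMeasure μ] {m : MeasurableSpace Ω} (hm : m ≤ m0)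
    {X : Ω → ℝ} (hX : MemLp X 2 μ) (hX_zero : μ[X | m] =ᵐ[μ] 0) :
    μ[fun ω => exp (X ω - X ω ^ 2 / 2) | m] ≤ᵐ[μ]
      fun ω => μ[fun ω => X ω ^ 2 | m] ω / 2 + 1 := by
  have hX₁ : Integrable X μ := hX.integrable one_le_two
  have hX₂ : Integrable (fun ω => X ω ^ 2) μ := hX.integrable_sq
  have hquad : (fun ω => 1 + X ω + X ω ^ 2 / 2) =
      (fun _ => 1) + X + (2⁻¹ : ℝ) • fun ω => X ω ^ 2 := by
    ext ω
    simp [div_eq_inv_mul]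
  have hquad_int : Integrable (fun ω => 1 + X ω + X ω ^ 2 / 2) μ := by
    rw [hquad]
    exact ((integrable_const 1).add hX₁).add (hX₂.smul _)
  refine (condExp_mono (integrable_exp_sub_sq_div_two hX.aestronglyMeasurable) hquad_int
    (.of_forall fun ω => exp_sub_sq_div_two_le (X ω))).trans_eq ?_
  rw [hquad]
  filter_upwards [condExp_add ((integrable_const 1).add hX₁) (hX₂.smul (2⁻¹ : ℝ)) m,
    condExp_add (integrable_const 1) hX₁ m, condExp_smul (2⁻¹ : ℝ) (fun ω => X ω ^ 2) m, hX_zero]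
    with ω h₁ h₂ h₃ h₄
  simp only [Pi.add_apply, Pi.smul_apply, smul_eq_mul] at h₁ h₂ h₃ h₄ ⊢
  rw [h₁, h₂, h₃, h₄, condExp_const hm, Pi.zero_apply]
  ring

noncomputable def bracketSum (ℱ : ℕ → MeasurableSpace Ω) (μ : Measure Ω) (X : ℕ → Ω → ℝ)
    (k : ℕ) (ω : Ω) : ℝ :=
  ∑ i ∈ Icc 1 k, (X i ω ^ 2 + μ[fun ω' => X i ω' ^ 2 | ℱ (i - 1)] ω)

noncomputable def expBracketProcess (ℱ : ℕ → MeasurableSpace Ω) (μ : Measure Ω)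
    (X : ℕ → Ω → ℝ) (k : ℕ) (ω : Ω) : ℝ :=
  exp (∑ i ∈ Icc 1 k, X i ω - bracketSum ℱ μ X k ω / 2)

section Bracket

variable {ℱ : ℕ → MeasurableSpace Ω} {X : ℕ → Ω → ℝ}

theorem bracketSum_succ (k : ℕ) (ω : Ω) :
    bracketSum ℱ μ X (k + 1) ω =
      bracketSum ℱ μ X k ω + (X (k + 1) ω ^ 2 + μ[fun ω' => X (k + 1) ω' ^ 2 | ℱ k] ω) := by
  rw [bracketSum, sum_Icc_succ_top (by omega), Nat.add_sub_cancel]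
  rfl

theorem bracketSum_congr {Y : ℕ → Ω → ℝ} {k : ℕ} (h : ∀ i ∈ Icc 1 k, X i = Y i) :
    bracketSum ℱ μ X k = bracketSum ℱ μ Y k := by
  ext ω
  exact sum_congr rfl fun i hi => by rw [h i hi]

theorem expBracketProcess_congr {Y : ℕ → Ω → ℝ} {k : ℕ} (h : ∀ i ∈ Icc 1 k, X i = Y i) :
    expBracketProcess ℱ μ X k = expBracketProcess ℱ μ Y k := by
  ext ω
  rw [expBracketProcess, expBracketProcess, bracketSum_congr h,
    sum_congr rfl fun i hi => by rw [h i hi]]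

theorem ae_bracketSum_const_smul (c : ℝ) :
    ∀ᵐ ω ∂μ, ∀ k, bracketSum ℱ μ (c • X) k ω = c ^ 2 * bracketSum ℱ μ X k ω := by
  have hsq : ∀ i, (fun ω => (c • X) i ω ^ 2) = c ^ 2 • fun ω => X i ω ^ 2 := fun i => by
    ext ω; simp [mul_pow]
  have := ae_all_iff.2 fun i => condExp_smul (c ^ 2) (fun ω => X i ω ^ 2) (ℱ (i - 1)) (μ := μ)
  filter_upwards [this] with ω hω k
  simp only [bracketSum, hsq, hω, mul_sum]
  exact sum_congr rfl fun i _ => by simp only [Pi.smul_apply, smul_eq_mul]; ring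

theorem bracketSum_neg : bracketSum ℱ μ (-X) = bracketSum ℱ μ X := by
  ext ω
  simp [bracketSum]

theorem ae_condExp_sq_nonneg :
    ∀ᵐ ω ∂μ, ∀ k, 0 ≤ μ[fun ω' => X (k + 1) ω' ^ 2 | ℱ k] ω :=
  ae_all_iff.2 fun _ => condExp_nonneg (.of_forall fun _ => sq_nonneg _)

theorem ae_monotone_bracketSum : ∀ᵐ ω ∂μ, Monotone fun k => bracketSum ℱ μ X k ω := by
  filter_upwards [ae_condExp_sq_nonneg (ℱ := ℱ) (X := X)] with ω hω
  refine monotone_nat_of_le_succ fun k => ?_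
  rw [bracketSum_succ]
  linarith [hω k, sq_nonneg (X (k + 1) ω)]

theorem expBracketProcess_pos (k : ℕ) (ω : Ω) : 0 < expBracketProcess ℱ μ X k ω :=
  exp_pos _

theorem expBracketProcess_zero : expBracketProcess ℱ μ X 0 = 1 := by
  ext
  simp [expBracketProcess, bracketSum]

theorem expBracketProcess_succ (k : ℕ) (ω : Ω) :
    expBracketProcess ℱ μ X (k + 1) ω = expBracketProcess ℱ μ X k ω *
      exp (-(μ[fun ω' => X (k + 1) ω' ^ 2 | ℱ k] ω / 2)) *
      exp (X (k + 1) ω - X (k + 1) ω ^ 2 / 2) := by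
  rw [expBracketProcess, expBracketProcess, bracketSum_succ, sum_Icc_succ_top (by omega),
    ← exp_add, ← exp_add]
  ring_nf

theorem ae_expBracketProcess_le (k : ℕ) :
    ∀ᵐ ω ∂μ, expBracketProcess ℱ μ X k ω ≤ exp (k / 2) := by
  filter_upwards [ae_condExp_sq_nonneg (ℱ := ℱ) (X := X)] with ω hω
  induction k with
  | zero => simp [expBracketProcess_zero]
  | succ k ih =>
    rw [expBracketProcess_succ]
    calc _ ≤ exp (k / 2) * 1 * exp (1 / 2) := by
          have := expBracketProcess_pos (ℱ := ℱ) (μ := μ) (X := X) k ω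
          gcongr
          · exact exp_le_one_iff.2 (by linarith [hω k])
          · nlinarith [sq_nonneg (X (k + 1) ω - 1)]
      _ = exp ((k + 1 : ℕ) / 2) := by rw [mul_one, ← exp_add]; push_cast; ring_nf

end Bracket

variable {𝒢 : Filtration ℕ m0} {X : ℕ → Ω → ℝ}

theorem StronglyAdapted.expBracketProcess (hX : StronglyAdapted 𝒢 X) :
    StronglyAdapted 𝒢 (expBracketProcess 𝒢 μ X) := by
  intro k
  have hXk : ∀ i ∈ Icc 1 k, Measurable[𝒢 k] (X i) := fun i hi =>
    ((hX i).mono (𝒢.mono (mem_Icc.1 hi).2)).measurable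
  have hCk : ∀ i ∈ Icc 1 k, Measurable[𝒢 k] (μ[fun ω => X i ω ^ 2 | 𝒢 (i - 1)]) := fun i hi =>
    (stronglyMeasurable_condExp.mono (𝒢.mono (by grind))).measurable
  exact ((Finset.measurable_sum _ hXk).sub ((Finset.measurable_sum _ fun i hi =>
    ((hXk i hi).pow_const 2).add (hCk i hi)).div_const 2)).exp.stronglyMeasurable

theorem supermartingale_expBracketProcess [IsFiniteMeasure μ] (hX : StronglyAdapted 𝒢 X)
    (hX_L2 : ∀ i, MemLp (X i) 2 μ) (hX_mds : ∀ i, μ[X (i + 1) | 𝒢 i] =ᵐ[μ] 0) :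
    Supermartingale (expBracketProcess 𝒢 μ X) 𝒢 μ := by
  have hint : ∀ k, Integrable (expBracketProcess 𝒢 μ X k) μ := fun k =>
    .of_bound (((hX.expBracketProcess k).mono (𝒢.le k)).aestronglyMeasurable) (exp (k / 2))
      (by filter_upwards [ae_expBracketProcess_le (ℱ := 𝒢) (X := X) k] with ω h
          rwa [norm_of_nonneg (expBracketProcess_pos k ω).le])
  refine supermartingale_nat hX.expBracketProcess hint fun k => ?_
  set C := μ[fun ω' => X (k + 1) ω' ^ 2 | 𝒢 k]
  set F : Ω → ℝ := fun ω => expBracketProcess 𝒢 μ X k ω * exp (-(C ω / 2))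
  set g : Ω → ℝ := fun ω => exp (X (k + 1) ω - X (k + 1) ω ^ 2 / 2)
  have hFg : expBracketProcess 𝒢 μ X (k + 1) = F * g := funext (expBracketProcess_succ k)
  have hF : StronglyMeasurable[𝒢 k] F :=
    ((hX.expBracketProcess k).measurable.mul
      (stronglyMeasurable_condExp.measurable.div_const 2).neg.exp).stronglyMeasurable
  have hpull : μ[F * g | 𝒢 k] =ᵐ[μ] F * μ[g | 𝒢 k] :=
    condExp_mul_of_stronglyMeasurable_left hF (hFg ▸ hint (k + 1))
      (integrable_exp_sub_sq_div_two (hX_L2 (k + 1)).aestronglyMeasurable)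
  filter_upwards [hpull, condExp_exp_sub_sq_div_two_le (𝒢.le k) (hX_L2 (k + 1)) (hX_mds k)]
    with ω hω hg
  rw [hFg, hω, Pi.mul_apply]
  have hF_nonneg : 0 ≤ F ω := (mul_pos (expBracketProcess_pos k ω) (exp_pos _)).le
  calc F ω * μ[g | 𝒢 k] ω ≤ F ω * (C ω / 2 + 1) := mul_le_mul_of_nonneg_left hg hF_nonneg
    _ ≤ F ω * exp (C ω / 2) := mul_le_mul_of_nonneg_left (add_one_le_exp _) hF_nonneg
    _ = expBracketProcess 𝒢 μ X k ω := by
      rw [mul_assoc, ← exp_add, neg_add_cancel, exp_zero, mul_one]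

theorem Supermartingale.mul_measureReal_exists_le_le [IsFiniteMeasure μ] {M : ℕ → Ω → ℝ}
    (hM : Supermartingale M 𝒢 μ) (hM_nonneg : 0 ≤ M) (c : ℝ) (n : ℕ) :
    c * μ.real {ω | ∃ k ≤ n, c ≤ M k ω} ≤ μ[M 0] := by
  -- Optional stopping at the first time `M` reaches `c`, capped at `n`.
  let τ : Ω → WithTop ℕ := fun ω => (hittingBtwn M {y | c ≤ y} 0 n ω : ℕ)
  have hτ : IsStoppingTime 𝒢 τ :=
    hM.stronglyAdapted.adapted.isStoppingTime_hittingBtwn measurableSet_Ici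
  have hτ_le : ∀ ω, τ ω ≤ n := fun ω => WithTop.coe_le_coe.mpr (hittingBtwn_le ω)
  have hint : Integrable (stoppedValue M τ) μ := integrable_stoppedValue ℕ hτ hM.integrable hτ_le
  have hA : MeasurableSet {ω | ∃ k ≤ n, c ≤ M k ω} := by
    have : {ω | ∃ k ≤ n, c ≤ M k ω} = ⋃ k ∈ Set.Iic n, {ω | c ≤ M k ω} := by ext; simp
    rw [this]
    exact .biUnion (Set.to_countable _) fun k _ => measurableSet_le measurable_const
      ((hM.stronglyMeasurable k).measurable.mono (𝒢.le k) le_rfl)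
  calc c * μ.real {ω | ∃ k ≤ n, c ≤ M k ω}
      ≤ ∫ ω in {ω | ∃ k ≤ n, c ≤ M k ω}, stoppedValue M τ ω ∂μ := by
        refine setIntegral_ge_of_const_le_real hA (measure_ne_top _ _)
          (fun ω ⟨k, hk, hck⟩ => ?_) hint.integrableOn
        exact stoppedValue_hittingBtwn_mem (s := {y | c ≤ y}) ⟨k, ⟨k.zero_le, hk⟩, hck⟩
    _ ≤ μ[stoppedValue M τ] := setIntegral_le_integral hint (.of_forall fun ω => hM_nonneg _ _)
    _ ≤ μ[stoppedValue M fun _ => (0 : ℕ)] := by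
        have := hM.neg.expected_stoppedValue_mono (isStoppingTime_const 𝒢 0) hτ
          (fun ω => bot_le) hτ_le
        simp only [stoppedValue, Pi.neg_apply, integral_neg, neg_le_neg_iff] at this
        exact this
    _ = μ[M 0] := rfl

-- The differences are extended by zero outside `[1, n]` so that the process is a supermartingale
-- on all of `ℕ`.
theorem supermartingale_expBracketProcess_truncate [IsFiniteMeasure μ] (n : ℕ) (c : ℝ)
    {D : ℕ → Ω → ℝ} (hadapt : ∀ i, 1 ≤ i → i ≤ n → Measurable[𝒢 i] (D i))
    (hL2 : ∀ i, 1 ≤ i → i ≤ n → MemLp (D i) 2 μ)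
    (hmds : ∀ i, 1 ≤ i → i ≤ n → μ[D i | 𝒢 (i - 1)] =ᵐ[μ] 0) :
    Supermartingale (expBracketProcess 𝒢 μ fun i => if i ∈ Icc 1 n then c • D i else 0) 𝒢 μ := by
  refine supermartingale_expBracketProcess (fun i => ?_) (fun i => ?_) (fun i => ?_)
  · split_ifs with hi
    · rw [mem_Icc] at hi
      exact ((hadapt i hi.1 hi.2).const_smul c).stronglyMeasurable
    · exact stronglyMeasurable_zero
  · split_ifs with hi
    · rw [mem_Icc] at hi
      exact (hL2 i hi.1 hi.2).const_smul c
    · exact .zero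
  · split_ifs with hi
    · rw [mem_Icc] at hi
      filter_upwards [condExp_smul c (D (i + 1)) (𝒢 i), hmds (i + 1) hi.1 hi.2] with ω h₁ h₂
      simp_all
    · rw [condExp_zero]

theorem measureReal_exists_lt_sum_inter_bracketSum_le [IsProbabilityMeasure μ] (n : ℕ)
    {D : ℕ → Ω → ℝ} (hadapt : ∀ i, 1 ≤ i → i ≤ n → Measurable[𝒢 i] (D i))
    (hL2 : ∀ i, 1 ≤ i → i ≤ n → MemLp (D i) 2 μ)
    (hmds : ∀ i, 1 ≤ i → i ≤ n → μ[D i | 𝒢 (i - 1)] =ᵐ[μ] 0) {x v : ℝ} (hx : 0 ≤ x)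
    (hv : 0 < v) :
    μ.real ({ω | ∃ k ∈ Icc 1 n, x < ∑ i ∈ Icc 1 k, D i ω} ∩
      {ω | bracketSum 𝒢 μ D n ω ≤ v ^ 2}) ≤ exp (-x ^ 2 / (2 * v ^ 2)) := by
  set L := x / v ^ 2
  set X : ℕ → Ω → ℝ := fun i => if i ∈ Icc 1 n then L • D i else 0
  set c := exp (x ^ 2 / (2 * v ^ 2))
  have hVille := (supermartingale_expBracketProcess_truncate n L hadapt hL2 hmds
    ).mul_measureReal_exists_le_le (fun k ω => (expBracketProcess_pos k ω).le) c n
  simp only [expBracketProcess_zero, Pi.one_apply, integral_const, probReal_univ, smul_eq_mul,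
    mul_one] at hVille
  have hsub : ({ω | ∃ k ∈ Icc 1 n, x < ∑ i ∈ Icc 1 k, D i ω} ∩
      {ω | bracketSum 𝒢 μ D n ω ≤ v ^ 2} : Set Ω) ≤ᵐ[μ]
      {ω | ∃ k ≤ n, c ≤ expBracketProcess 𝒢 μ X k ω} := by
    filter_upwards [ae_bracketSum_const_smul (ℱ := 𝒢) (X := D) (μ := μ) L,
      ae_monotone_bracketSum (ℱ := 𝒢) (X := D) (μ := μ)] with ω hscale hmono
    rintro ⟨⟨k, hk, hxk⟩, hV⟩
    rw [mem_Icc] at hk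
    refine ⟨k, hk.2, ?_⟩
    rw [expBracketProcess_congr (X := X) (Y := L • D)
        fun i hi => if_pos (Icc_subset_Icc_right hk.2 hi),
      expBracketProcess, hscale, exp_le_exp]
    have hVk : bracketSum 𝒢 μ D k ω ≤ v ^ 2 := (hmono hk.2).trans hV
    calc x ^ 2 / (2 * v ^ 2) = L * x - L ^ 2 * v ^ 2 / 2 := by simp only [L]; field_simp; ring
      _ ≤ L * ∑ i ∈ Icc 1 k, D i ω - L ^ 2 * bracketSum 𝒢 μ D k ω / 2 := by gcongr
      _ = _ := by simp [mul_sum]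
  calc _ ≤ μ.real {ω | ∃ k ≤ n, c ≤ expBracketProcess 𝒢 μ X k ω} :=
        ENNReal.toReal_mono (measure_ne_top _ _) (measure_mono_ae hsub)
    _ ≤ 1 / c := (le_div_iff₀' (exp_pos _)).2 hVille
    _ = exp (-x ^ 2 / (2 * v ^ 2)) := by rw [one_div, ← exp_neg, neg_div]

end MeasureTheory

theorem stmt_6_general {Ω : Type*} [MeasureSpace Ω] [IsProbabilityMeasure (ℙ : Measure Ω)]
    (n : ℕ)
    (ℱ : ℕ → MeasurableSpace Ω) (hℱmono : Monotone ℱ)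
    (hℱle : ∀ i, ℱ i ≤ ‹MeasureSpace Ω›.toMeasurableSpace)
    (D : ℕ → Ω → ℝ)
    (hadapt : ∀ i, 1 ≤ i → i ≤ n → Measurable[ℱ i] (D i))
    (hL2 : ∀ i, 1 ≤ i → i ≤ n → MemLp (D i) 2 ℙ)
    (hmds : ∀ i, 1 ≤ i → i ≤ n → ℙ[D i | ℱ (i - 1)] =ᵐ[ℙ] 0) :
    ∀ x v : ℝ, 0 < x → 0 < v →
      (ℙ {ω | ∃ k ∈ Finset.Icc 1 n, x < |∑ i ∈ Finset.Icc 1 k, D i ω|}).toReal ≤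
        2 * Real.exp (-x ^ 2 / (2 * v ^ 2)) +
          (ℙ {ω | v ^ 2 < ∑ i ∈ Finset.Icc 1 n,
              ((D i ω) ^ 2 + (ℙ[fun ω' => (D i ω') ^ 2 | ℱ (i - 1)]) ω)}).toReal := by
  intro x v hx hv
  let 𝒢 : Filtration ℕ _ := ⟨ℱ, hℱmono, hℱle⟩
  change Measure.real ℙ _ ≤ _ + Measure.real ℙ {ω | v ^ 2 < bracketSum 𝒢 ℙ D n ω}
  have hmds' : ∀ i, 1 ≤ i → i ≤ n → ℙ[D i | 𝒢 (i - 1)] =ᵐ[ℙ] 0 := hmds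
  have hpos := measureReal_exists_lt_sum_inter_bracketSum_le n hadapt hL2 hmds' hx.le hv
  have hneg := measureReal_exists_lt_sum_inter_bracketSum_le (𝒢 := 𝒢) (D := -D) n
    (fun i h₁ h₂ => (hadapt i h₁ h₂).neg) (fun i h₁ h₂ => (hL2 i h₁ h₂).neg)
    (fun i h₁ h₂ => (condExp_neg (D i) _).trans
      (by filter_upwards [hmds' i h₁ h₂] with ω h; simp [h])) hx.le hv
  simp only [bracketSum_neg, Pi.neg_apply, sum_neg_distrib] at hneg
  have hsub : {ω | ∃ k ∈ Icc 1 n, x < |∑ i ∈ Icc 1 k, D i ω|} ⊆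
      ({ω | ∃ k ∈ Icc 1 n, x < ∑ i ∈ Icc 1 k, D i ω} ∩ {ω | bracketSum 𝒢 ℙ D n ω ≤ v ^ 2}) ∪
      ({ω | ∃ k ∈ Icc 1 n, x < -∑ i ∈ Icc 1 k, D i ω} ∩ {ω | bracketSum 𝒢 ℙ D n ω ≤ v ^ 2}) ∪
      {ω | v ^ 2 < bracketSum 𝒢 ℙ D n ω} := by
    rintro ω ⟨k, hk, hxk⟩
    rcases le_or_gt (bracketSum 𝒢 ℙ D n ω) (v ^ 2) with hV | hV
    · rcases lt_abs.1 hxk with h | h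
      exacts [.inl (.inl ⟨⟨k, hk, h⟩, hV⟩), .inl (.inr ⟨⟨k, hk, h⟩, hV⟩)]
    · exact .inr hV
  calc _ ≤ _ := measureReal_mono hsub
    _ ≤ exp (-x ^ 2 / (2 * v ^ 2)) + exp (-x ^ 2 / (2 * v ^ 2)) +
        Measure.real ℙ {ω | v ^ 2 < bracketSum 𝒢 ℙ D n ω} := by
      grw [measureReal_union_le, measureReal_union_le, hpos, hneg]
    _ = _ := by ring

theorem stmt_6 {Ω : Type*} [MeasureSpace Ω] [IsProbabilityMeasure (ℙ : Measure Ω)]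
    (n : ℕ) (hn : 1 ≤ n)
    (ℱ : ℕ → MeasurableSpace Ω) (hℱmono : Monotone ℱ)
    (hℱle : ∀ i, ℱ i ≤ ‹MeasureSpace Ω›.toMeasurableSpace)
    (D : ℕ → Ω → ℝ)
    (hadapt : ∀ i, 1 ≤ i → i ≤ n → Measurable[ℱ i] (D i))
    (hL2 : ∀ i, 1 ≤ i → i ≤ n → MemLp (D i) 2 ℙ)
    (hmds : ∀ i, 1 ≤ i → i ≤ n → ℙ[D i | ℱ (i - 1)] =ᵐ[ℙ] 0) :
    ∀ x v : ℝ, 0 < x → 0 < v →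
      (ℙ {ω | ∃ k ∈ Finset.Icc 1 n, x < |∑ i ∈ Finset.Icc 1 k, D i ω|}).toReal ≤
        2 * Real.exp (-x ^ 2 / (2 * v ^ 2)) +
          (ℙ {ω | v ^ 2 < ∑ i ∈ Finset.Icc 1 n,
              ((D i ω) ^ 2 + (ℙ[fun ω' => (D i ω') ^ 2 | ℱ (i - 1)]) ω)}).toReal :=
  stmt_6_general n ℱ hℱmono hℱle D hadapt hL2 hmds
end

section
/- Let γ > 0, q ≥ 0 and c ≥ 1. Then ∫_1^∞ exp( -(c·u^{1/2})^γ )·(1 + ln u)^q du ≤ K_{γ,q} · exp( -c^γ ) for a constant K_{γ,q} depending only on γ and q. -/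
/-!
For `a, b ≥ 1` we have `(a - 1) (b - 1) ≥ 0`, i.e. `a b ≥ a + b - 1`. With `a = c ^ γ` and
`b = u ^ (γ / 2)` this splits `exp (-(c √u) ^ γ) ≤ exp (-c ^ γ) · e · exp (-u ^ (γ / 2))`, so the
integral is at most `exp (-c ^ γ)` times `e ∫₁^∞ exp (-u ^ (γ / 2)) (1 + log u) ^ q du`, which is
finite because `1 + log u ≤ u` and `u ^ q exp (-u ^ (γ / 2))` is integrable (a Gamma integral).
-/

open MeasureTheory Set Real

theorem Real.exp_neg_mul_le {a b : ℝ} (ha : 1 ≤ a) (hb : 1 ≤ b) :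
    exp (-(a * b)) ≤ exp (-a) * exp (1 - b) := by
  rw [← exp_add, exp_le_exp]
  nlinarith [mul_nonneg (sub_nonneg.mpr ha) (sub_nonneg.mpr hb)]

theorem Real.one_add_log_rpow_le_rpow {u q : ℝ} (hu : 1 ≤ u) (hq : 0 ≤ q) :
    (1 + log u) ^ q ≤ u ^ q := by
  have hlog := log_le_sub_one_of_pos (zero_lt_one.trans_le hu)
  exact rpow_le_rpow (by linarith [log_nonneg hu]) (by linarith) hq

theorem integrableOn_exp_neg_rpow_mul_one_add_log_rpow {p q : ℝ} (hp : 0 < p) (hq : 0 ≤ q) :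
    IntegrableOn (fun u : ℝ => exp (-u ^ p) * (1 + log u) ^ q) (Ioi 1) := by
  have hdom : IntegrableOn (fun u : ℝ => u ^ q * exp (-u ^ p)) (Ioi 1) :=
    (integrableOn_rpow_mul_exp_neg_rpow (by linarith) hp).mono_set (Ioi_subset_Ioi zero_le_one)
  refine hdom.mono' (by fun_prop) ((ae_restrict_iff' measurableSet_Ioi).mpr (.of_forall ?_))
  intro u (hu : 1 < u)
  rw [norm_of_nonneg (by positivity [log_nonneg hu.le]), mul_comm]
  exact mul_le_mul_of_nonneg_right (one_add_log_rpow_le_rpow hu.le hq) (exp_nonneg _)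

theorem Real.exp_neg_mul_sqrt_rpow_le {c u γ : ℝ} (hc : 1 ≤ c) (hu : 1 ≤ u) (hγ : 0 ≤ γ) :
    exp (-(c * u ^ ((1 : ℝ) / 2)) ^ γ) ≤ exp (-c ^ γ) * exp 1 * exp (-u ^ (γ / 2)) := by
  have hsplit : (c * u ^ ((1 : ℝ) / 2)) ^ γ = c ^ γ * u ^ (γ / 2) := by
    rw [mul_rpow (by linarith) (by positivity), ← rpow_mul (by linarith)]
    ring_nf
  rw [hsplit, mul_assoc, ← exp_add, ← sub_eq_add_neg]
  exact exp_neg_mul_le (one_le_rpow hc hγ) (one_le_rpow hu (by positivity))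

theorem stmt_18 (γ q : ℝ) (hγ : 0 < γ) (hq : 0 ≤ q) :
    ∃ K : ℝ, ∀ c : ℝ, 1 ≤ c →
      ∫ u in Set.Ioi (1 : ℝ),
          Real.exp (-(c * u ^ ((1:ℝ)/2)) ^ γ) * (1 + Real.log u) ^ q ≤
        K * Real.exp (-c ^ γ) := by
  set g : ℝ → ℝ := fun u => exp (-u ^ (γ / 2)) * (1 + log u) ^ q
  refine ⟨exp 1 * ∫ u in Ioi (1 : ℝ), g u, fun c hc => ?_⟩
  have hbound : ∀ u ∈ Ioi (1 : ℝ), 0 ≤ exp (-(c * u ^ ((1 : ℝ) / 2)) ^ γ) * (1 + log u) ^ q ∧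
      exp (-(c * u ^ ((1 : ℝ) / 2)) ^ γ) * (1 + log u) ^ q ≤ exp (-c ^ γ) * exp 1 * g u := by
    intro u (hu : 1 < u)
    have hlog : 0 ≤ (1 + log u) ^ q := by positivity [log_nonneg hu.le]
    refine ⟨by positivity, ?_⟩
    rw [← mul_assoc]
    exact mul_le_mul_of_nonneg_right (exp_neg_mul_sqrt_rpow_le hc hu.le hγ.le) hlog
  have hbound_ae := (ae_restrict_iff' (μ := volume) measurableSet_Ioi).mpr (.of_forall hbound)
  calc _ ≤ ∫ u in Ioi (1 : ℝ), exp (-c ^ γ) * exp 1 * g u :=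
        integral_mono_of_nonneg (hbound_ae.mono fun _ h => h.1)
          ((integrableOn_exp_neg_rpow_mul_one_add_log_rpow (half_pos hγ) hq).const_mul _)
          (hbound_ae.mono fun _ h => h.2)
    _ = _ := by rw [integral_const_mul]; ring
end
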